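/- Let f_nyq > 0, N ≥ 3, and Δ₁,…,Δ_N ∈ ℝ, and suppose there is an index n₀ ∈ {1,…,N−2} with 0 < (Δ_{n₀+2} − 2·Δ_{n₀+1} + Δ_{n₀})·f_nyq < 1. Let (ω, τ, φ) and (ω', τ', φ') be parameter triples with ω, ω' ∈ (0, 2π·f_nyq], τ·ω ∈ [0, 2π), τ'·ω' ∈ [0, 2π), and φ, φ' ∈ [0, 2π). If ((n−1)·τ·ω + Δ_n·ω + φ) mod 2π = ((n−1)·τ'·ω' + Δ_n·ω' + φ') mod 2π for all n = 1,…,N, then ω = ω', τ = τ', and φ = φ'. -/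
import Mathlib


/-- `mod2pi x` is the remainder of the Euclidean division of `x` by `2π`, lying in `[0, 2π)`. -/
noncomputable def mod2pi (x : ℝ) : ℝ := toIcoMod Real.two_pi_pos 0 x

private lemma mod2pi_exists {a b : ℝ} (h : mod2pi a = mod2pi b) :
    ∃ k : ℤ, b - a = (k : ℝ) * (2 * Real.pi) := by
  obtain ⟨k, hk⟩ := (toIcoMod_eq_toIcoMod Real.two_pi_pos).1 h
  exact ⟨k, by simpa [zsmul_eq_mul] using hk⟩

private lemma small_int {a b : ℝ} {k : ℤ} (h1 : -(2 * Real.pi) < b - a)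
    (h2 : b - a < 2 * Real.pi) (h : b - a = (k : ℝ) * (2 * Real.pi)) : a = b := by
  have hp := Real.two_pi_pos
  have hk1 : (k : ℝ) < 1 := by nlinarith
  have hk2 : (-1 : ℝ) < (k : ℝ) := by nlinarith
  have hk1' : k < 1 := by exact_mod_cast hk1
  have hk2' : (-1 : ℤ) < k := by exact_mod_cast hk2
  have : k = 0 := by omega
  subst this
  simp at h
  linarith

/-- Identifiability of the carrier frequency `ω`, inter-sensor delay `τ`, and phase
ambiguity `φ` from the (mod-2π) phases of a noiseless steering-matrix column, under
Assumptions A4 (`0 < (Δ_{n₀+2} − 2Δ_{n₀+1} + Δ_{n₀})·f_nyq < 1` for some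
`n₀ ∈ {1,…,N−2}`) and A6 (`τω ∈ [0, 2π)`). -/
theorem steering_identifiability (f_nyq : ℝ) (hf : 0 < f_nyq)
    (N : ℕ) (hN : 3 ≤ N) (Δ : ℕ → ℝ)
    (n₀ : ℕ) (hn₀ : 1 ≤ n₀) (hn₀' : n₀ ≤ N - 2)
    (hA4₀ : 0 < (Δ (n₀ + 2) - 2 * Δ (n₀ + 1) + Δ n₀) * f_nyq)
    (hA4₁ : (Δ (n₀ + 2) - 2 * Δ (n₀ + 1) + Δ n₀) * f_nyq < 1)
    (omg τ φ omg' τ' φ' : ℝ)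
    (homg : 0 < omg) (homg' : 0 < omg')
    (homg_ub : omg ≤ 2 * Real.pi * f_nyq) (homg'_ub : omg' ≤ 2 * Real.pi * f_nyq)
    (hτ : 0 ≤ τ * omg) (hτ_ub : τ * omg < 2 * Real.pi)
    (hτ' : 0 ≤ τ' * omg') (hτ'_ub : τ' * omg' < 2 * Real.pi)
    (hφ : 0 ≤ φ) (hφ_ub : φ < 2 * Real.pi)
    (hφ' : 0 ≤ φ') (hφ'_ub : φ' < 2 * Real.pi)
    (heq : ∀ n, 1 ≤ n → n ≤ N →
      mod2pi (((n : ℝ) - 1) * τ * omg + Δ n * omg + φ) =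
      mod2pi (((n : ℝ) - 1) * τ' * omg' + Δ n * omg' + φ')) :
    omg = omg' ∧ τ = τ' ∧ φ = φ' := by
  have hp := Real.two_pi_pos
  set D : ℝ := Δ (n₀ + 2) - 2 * Δ (n₀ + 1) + Δ n₀ with hD
  have hDpos : 0 < D := by
    by_contra h
    push_neg at h
    nlinarith
  obtain ⟨k₀, hk₀⟩ := mod2pi_exists (heq n₀ hn₀ (by omega))
  obtain ⟨k₁, hk₁⟩ := mod2pi_exists (heq (n₀ + 1) (by omega) (by omega))
  obtain ⟨k₂, hk₂⟩ := mod2pi_exists (heq (n₀ + 2) (by omega) (by omega))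
  obtain ⟨k₃, hk₃⟩ := mod2pi_exists (heq 1 le_rfl (by omega))
  push_cast at hk₀ hk₁ hk₂ hk₃
  -- ω = ω'
  have hDomg : 0 < D * omg ∧ D * omg < 2 * Real.pi := by
    constructor
    · exact mul_pos hDpos homg
    · nlinarith
  have hDomg' : 0 < D * omg' ∧ D * omg' < 2 * Real.pi := by
    constructor
    · exact mul_pos hDpos homg'
    · nlinarith
  have hsec : D * omg' - D * omg = ((k₂ - 2 * k₁ + k₀ : ℤ) : ℝ) * (2 * Real.pi) := by
    push_cast
    linear_combination hk₂ - 2 * hk₁ + hk₀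
  have homg_eq : omg = omg' := by
    have := small_int (k := k₂ - 2 * k₁ + k₀) (by linarith [hDomg.1, hDomg.2, hDomg'.1, hDomg'.2]) (by linarith [hDomg.1, hDomg.2, hDomg'.1, hDomg'.2]) hsec
    have hD0 : D ≠ 0 := ne_of_gt hDpos
    exact mul_left_cancel₀ hD0 this
  subst homg_eq
  -- τ = τ'
  have hfst : τ' * omg - τ * omg = ((k₁ - k₀ : ℤ) : ℝ) * (2 * Real.pi) := by
    push_cast
    linear_combination hk₁ - hk₀
  have hτeq : τ * omg = τ' * omg := small_int (by linarith) (by linarith) hfst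
  have hττ : τ = τ' := mul_right_cancel₀ (ne_of_gt homg) hτeq
  -- φ = φ'
  have hphi : φ' - φ = ((k₃ : ℤ) : ℝ) * (2 * Real.pi) := by
    linear_combination hk₃
  exact ⟨rfl, hττ, small_int (by linarith) (by linarith) hphi⟩
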